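/- arXiv:2603.22664 — 3 statements merged into one kernel-verified Lean document; each statement's English description precedes it below -/
import Mathlib

section
/- Let p ≥ 1 and d ∈ ℕ. Then C_{n,p,d}²/C_{n,p,2d} = (n(n+2d)/(n+d)²) · Γ(n/p)Γ((n+2d)/p)/Γ((n+d)/p)², and there exist constants K ≥ 0 and N ∈ ℕ depending only on p and d such that for every n ≥ N: |C_{n,p,d}²/C_{n,p,2d} − 1 − d²/(pn)| ≤ K/n². -/
open MeasureTheory

noncomputable section

/-- Variance of a real function with respect to a measure. -/
def mVar {α : Type*} [MeasurableSpace α] (μ : Measure α) (f : α → ℝ) : ℝ :=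
  (∫ x, f x ^ 2 ∂μ) - (∫ x, f x ∂μ) ^ 2

/-- `coeffNorm d f` is `coeff_d(f)`, the ℓ² norm of the coefficients of the degree-`d`
homogeneous part of `f`. -/
def coeffNorm {n : ℕ} (d : ℕ) (f : MvPolynomial (Fin n) ℝ) : ℝ :=
  Real.sqrt (∑ I ∈ f.support.filter (fun I => (I.sum fun _ e => e) = d),
    (MvPolynomial.coeff I f) ^ 2)

/-- The isotropic radius `R_{n,p}`. -/
def Rnp (n : ℕ) (p : ℝ) : ℝ :=
  Real.sqrt ((((n : ℝ) + 2) / n) * (Real.Gamma (((n : ℝ) + 2) / p) / Real.Gamma ((n : ℝ) / p)) *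
    (Real.Gamma (1 / p) / Real.Gamma (3 / p)))

/-- The isotropic `L^p` ball `B_{n,p}` in ℝ^n. -/
def lpBall (n : ℕ) (p : ℝ) : Set (Fin n → ℝ) :=
  {x | ∑ i, |x i| ^ p ≤ Rnp n p ^ p}

/-- `μ_{n,p}`, the uniform probability measure on the isotropic `L^p` ball. -/
def muNP (n : ℕ) (p : ℝ) : Measure (Fin n → ℝ) :=
  (volume (lpBall n p))⁻¹ • volume.restrict (lpBall n p)

/-- The proportionality constant `C_{n,p,d} = R_{n,p}^d (n/(n+d)) Γ(n/p)/Γ((n+d)/p)`. -/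
def Cnpd (n : ℕ) (p : ℝ) (d : ℕ) : ℝ :=
  Rnp n p ^ d * ((n : ℝ) / ((n : ℝ) + d)) *
    (Real.Gamma ((n : ℝ) / p) / Real.Gamma (((n : ℝ) + d) / p))

/-!
Put `a = d/p` and `x = n/p`. The ratio is the product of `n(n+2d)/(n+d)² = 1 - d²/(n+d)²` and
`Γ(x)Γ(x+2a)/Γ(x+a)²`. By Euler's limit formula the Gamma quotient is the infinite product
`∏_{j ≥ 0} (1 + a²/((x+j)(x+2a+j)))`, so it lies between `1 + S` and `exp S`, where `S` is the
sum of the terms `a²/((x+j)(x+2a+j))`. Comparing these with the telescoping terms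
`1/((c+j)(c+j+1))` for `c = x+2a` and `c = x-1` gives `a²/(x+2a) ≤ S ≤ a²/(x-1)`, hence the
Gamma quotient is `1 + a²/x + O(x⁻²)`, and `a²/x = d²/(pn)`.
-/

open Filter Finset Real Topology

lemma one_add_sum_le_prod_one_add {ι R : Type*} [LinearOrder ι] [CommSemiring R] [PartialOrder R]
    [IsOrderedRing R] (s : Finset ι) {f : ι → R} (hf : ∀ i, 0 ≤ f i) :
    1 + ∑ i ∈ s, f i ≤ ∏ i ∈ s, (1 + f i) := by
  rw [prod_one_add_ordered]
  gcongr with i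
  exact le_mul_of_one_le_right (hf i) (Finset.one_le_prod fun j _ => le_add_of_nonneg_right (hf j))

lemma sum_range_inv_mul_add_one {c : ℝ} (hc : 0 < c) (n : ℕ) :
    ∑ j ∈ range n, ((c + j) * (c + j + 1))⁻¹ = c⁻¹ - (c + n)⁻¹ := by
  induction n with
  | zero => simp
  | succ n ih =>
    rw [sum_range_succ, ih]
    push_cast
    field_simp
    ring

def gammaRatio (x a : ℝ) : ℝ := Gamma x * Gamma (x + 2 * a) / Gamma (x + a) ^ 2

section GammaRatio

variable {x a : ℝ}

lemma gammaSeq_ratio_eq_prod (hx : 0 < x) (ha : 0 ≤ a) {n : ℕ} (hn : n ≠ 0) :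
    GammaSeq x n * GammaSeq (x + 2 * a) n / GammaSeq (x + a) n ^ 2 =
      ∏ j ∈ range (n + 1), (1 + a ^ 2 / ((x + j) * (x + 2 * a + j))) := by
  have hn0 : (0 : ℝ) < n := by positivity
  have hpow : (n : ℝ) ^ x * (n : ℝ) ^ (x + 2 * a) = ((n : ℝ) ^ (x + a)) ^ 2 := by
    rw [← rpow_add hn0, ← rpow_natCast, ← rpow_mul hn0.le]
    ring_nf
  have hfactor : ∀ j ∈ range (n + 1), 1 + a ^ 2 / ((x + j) * (x + 2 * a + j)) =
      (x + a + j) ^ 2 / ((x + j) * (x + 2 * a + j)) := fun j _ => by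
    field_simp
    ring
  rw [prod_congr rfl hfactor, prod_div_distrib, prod_mul_distrib, prod_pow]
  have : (0 : ℝ) < ∏ j ∈ range (n + 1), (x + a + j) := prod_pos fun j _ => by positivity
  have : (0 : ℝ) < ∏ j ∈ range (n + 1), (x + j) := prod_pos fun j _ => by positivity
  have : (0 : ℝ) < ∏ j ∈ range (n + 1), (x + 2 * a + j) := prod_pos fun j _ => by positivity
  have : (0 : ℝ) < (n : ℝ) ^ (x + a) := by positivity
  simp only [GammaSeq]
  field_simp
  linear_combination hpow

lemma tendsto_prod_one_add_gammaRatio (hx : 0 < x) (ha : 0 ≤ a) :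
    Tendsto (fun n : ℕ => ∏ j ∈ range n, (1 + a ^ 2 / ((x + j) * (x + 2 * a + j)))) atTop
      (𝓝 (gammaRatio x a)) := by
  rw [← tendsto_add_atTop_iff_nat 1]
  have hlim := ((GammaSeq_tendsto_Gamma x).mul (GammaSeq_tendsto_Gamma (x + 2 * a))).div
    ((GammaSeq_tendsto_Gamma (x + a)).pow 2) (by positivity)
  refine hlim.congr' ?_
  filter_upwards [eventually_ne_atTop 0] with n hn using gammaSeq_ratio_eq_prod hx ha hn

lemma one_add_div_le_gammaRatio (hx : 0 < x) (ha : 0 ≤ a) :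
    1 + a ^ 2 / (x + 2 * a) ≤ gammaRatio x a := by
  set c := x + 2 * a
  have hc : 0 < c := by positivity
  have hlower : Tendsto (fun n : ℕ => 1 + a ^ 2 * (c⁻¹ - (c + n)⁻¹)) atTop
      (𝓝 (1 + a ^ 2 * (c⁻¹ - 0))) :=
    ((tendsto_atTop_add_const_left _ c tendsto_natCast_atTop_atTop).inv_tendsto_atTop.const_sub _
      |>.const_mul _).const_add _
  rw [sub_zero, ← div_eq_mul_inv] at hlower
  refine le_of_tendsto_of_tendsto' hlower (tendsto_prod_one_add_gammaRatio hx ha) fun n => ?_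
  refine le_trans ?_ (one_add_sum_le_prod_one_add _ fun j => by positivity)
  rw [← sum_range_inv_mul_add_one hc, mul_sum]
  gcongr with j
  rw [div_eq_mul_inv]
  gcongr a ^ 2 * ?_
  exact inv_anti₀ (by positivity) (by nlinarith)

lemma gammaRatio_le_exp (hx : 1 < x) (ha : 0 ≤ a) :
    gammaRatio x a ≤ exp (a ^ 2 / (x - 1)) := by
  set c := x - 1
  have hc : 0 < c := by linarith
  refine le_of_tendsto' (tendsto_prod_one_add_gammaRatio (by linarith) ha) fun n => ?_
  refine (prod_one_add_le_exp_sum _ fun j => by positivity).trans (exp_le_exp.2 ?_)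
  calc ∑ j ∈ range n, a ^ 2 / ((x + j) * (x + 2 * a + j))
      ≤ ∑ j ∈ range n, a ^ 2 * ((c + j) * (c + j + 1))⁻¹ := by
        gcongr with j
        rw [div_eq_mul_inv]
        gcongr a ^ 2 * ?_
        exact inv_anti₀ (by positivity) (by nlinarith)
    _ = a ^ 2 * (c⁻¹ - (c + n)⁻¹) := by rw [← mul_sum, sum_range_inv_mul_add_one hc]
    _ ≤ a ^ 2 / c := by
        rw [div_eq_mul_inv]
        gcongr
        exact sub_le_self _ (by positivity)

lemma abs_gammaRatio_sub_le (ha : 0 ≤ a) (hx : a ^ 2 + 2 ≤ x) :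
    |gammaRatio x a - 1 - a ^ 2 / x| ≤ (2 * a ^ 2 + 2 * a ^ 3 + 4 * a ^ 4) / x ^ 2 := by
  have hx2 : 2 ≤ x := by nlinarith
  have hx0 : 0 < x := by linarith
  set t := a ^ 2 / (x - 1)
  have ht0 : 0 ≤ t := div_nonneg (sq_nonneg a) (by linarith)
  have ht_le : t ≤ 2 * a ^ 2 / x := by
    rw [div_le_div_iff₀ (by linarith) hx0]
    nlinarith
  have ht : |t| ≤ 1 := by
    rw [abs_of_nonneg ht0, div_le_one (by linarith)]
    linarith
  have hexp : exp t ≤ 1 + t + t ^ 2 := by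
    linarith [(abs_le.1 (abs_exp_sub_one_sub_id_le ht)).2]
  have hupper := (gammaRatio_le_exp (by linarith) ha).trans hexp
  have hlower := one_add_div_le_gammaRatio hx0 ha
  have ht_sub : t - a ^ 2 / x ≤ 2 * a ^ 2 / x ^ 2 := by
    rw [div_sub_div _ _ (by linarith) hx0.ne', div_le_div_iff₀ (by nlinarith) (by positivity)]
    nlinarith [mul_nonneg (sq_nonneg a) (mul_nonneg hx0.le (by linarith : 0 ≤ x - 2))]
  have ht_sq : t ^ 2 ≤ 4 * a ^ 4 / x ^ 2 := by
    calc t ^ 2 ≤ (2 * a ^ 2 / x) ^ 2 := pow_le_pow_left₀ ht0 ht_le 2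
      _ = 4 * a ^ 4 / x ^ 2 := by ring
  have hshift : a ^ 2 / x - a ^ 2 / (x + 2 * a) ≤ 2 * a ^ 3 / x ^ 2 := by
    rw [div_sub_div _ _ hx0.ne' (by positivity), div_le_div_iff₀ (by positivity) (by positivity)]
    nlinarith [pow_nonneg ha 4, pow_nonneg ha 3]
  have hsplit : (2 * a ^ 2 + 2 * a ^ 3 + 4 * a ^ 4) / x ^ 2 =
      2 * a ^ 2 / x ^ 2 + 2 * a ^ 3 / x ^ 2 + 4 * a ^ 4 / x ^ 2 := by ring
  have : 0 ≤ 2 * a ^ 2 / x ^ 2 := by positivity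
  have : 0 ≤ 2 * a ^ 3 / x ^ 2 := by positivity
  have : 0 ≤ 4 * a ^ 4 / x ^ 2 := by positivity
  rw [abs_le, hsplit]
  constructor <;> linarith

end GammaRatio

lemma Cnpd_sq_div_Cnpd_two_mul {p : ℝ} (hp : 0 < p) (d n : ℕ) :
    Cnpd n p d ^ 2 / Cnpd n p (2 * d)
      = ((n : ℝ) * ((n : ℝ) + 2 * d) / ((n : ℝ) + d) ^ 2) *
        (Gamma ((n : ℝ) / p) * Gamma (((n : ℝ) + 2 * d) / p) /
          Gamma (((n : ℝ) + d) / p) ^ 2) := by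
  rcases Nat.eq_zero_or_pos n with rfl | hn
  · simp [Cnpd]
  have hn0 : (0 : ℝ) < n := by exact_mod_cast hn
  have hR : 0 < Rnp n p := sqrt_pos.2 (by positivity)
  unfold Cnpd
  push_cast
  rw [pow_mul']
  field_simp

lemma abs_Cnpd_sq_div_Cnpd_two_mul_sub_le {p : ℝ} (hp : 0 < p) (d n : ℕ)
    (hn : p * (((d : ℝ) / p) ^ 2 + 2) ≤ n) :
    |Cnpd n p d ^ 2 / Cnpd n p (2 * d) - 1 - (d : ℝ) ^ 2 / (p * n)| ≤
      (4 * d ^ 2 + 2 * d ^ 3 / p + 4 * d ^ 4 / p ^ 2) / (n : ℝ) ^ 2 := by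
  have hn0 : (0 : ℝ) < n := lt_of_lt_of_le (by positivity) hn
  have hd : (0 : ℝ) ≤ d := d.cast_nonneg
  set a := (d : ℝ) / p
  set x := (n : ℝ) / p
  set K := 2 * a ^ 2 + 2 * a ^ 3 + 4 * a ^ 4
  have hx : a ^ 2 + 2 ≤ x := by rw [le_div_iff₀ hp]; linarith
  have hG : Gamma ((n : ℝ) / p) * Gamma (((n : ℝ) + 2 * d) / p) /
      Gamma (((n : ℝ) + d) / p) ^ 2 = gammaRatio x a := by
    have h1 : ((n : ℝ) + d) / p = x + a := add_div _ _ _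
    have h2 : ((n : ℝ) + 2 * d) / p = x + 2 * a := by rw [add_div, mul_div_assoc]
    rw [h1, h2, gammaRatio]
  have hP : (n : ℝ) * (n + 2 * d) / (n + d) ^ 2 = 1 - (d : ℝ) ^ 2 / (n + d) ^ 2 := by
    field_simp
    ring
  have hax : a ^ 2 / x = (d : ℝ) ^ 2 / (p * n) := by
    simp only [a, x]
    field_simp
  rw [Cnpd_sq_div_Cnpd_two_mul hp, hG, hP, ← hax]
  set q := (d : ℝ) ^ 2 / (n + d) ^ 2
  have hq0 : 0 ≤ q := by positivity
  have hq : q ≤ (d : ℝ) ^ 2 / (n : ℝ) ^ 2 := by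
    simp only [q]
    gcongr
    linarith
  have hq1 : q ≤ 1 := by
    rw [div_le_one (by positivity)]
    nlinarith
  have hax1 : a ^ 2 / x ≤ 1 := by rw [div_le_one (by nlinarith)]; linarith
  calc |(1 - q) * gammaRatio x a - 1 - a ^ 2 / x|
      = |(1 - q) * (gammaRatio x a - 1 - a ^ 2 / x) - q * (1 + a ^ 2 / x)| := by ring_nf
    _ ≤ |1 - q| * |gammaRatio x a - 1 - a ^ 2 / x| + q * (1 + a ^ 2 / x) := by
        refine (abs_sub _ _).trans_eq ?_
        rw [abs_mul, abs_of_nonneg (by positivity : 0 ≤ q * (1 + a ^ 2 / x))]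
    _ ≤ 1 * (K / x ^ 2) + (d : ℝ) ^ 2 / (n : ℝ) ^ 2 * 2 := by
        rw [abs_of_nonneg (by linarith : 0 ≤ 1 - q)]
        gcongr
        · linarith
        · exact abs_gammaRatio_sub_le (by positivity) hx
        · linarith
    _ = (4 * d ^ 2 + 2 * d ^ 3 / p + 4 * d ^ 4 / p ^ 2) / (n : ℝ) ^ 2 := by
        simp only [K, a, x]
        field_simp
        ring

/-- Lemma 2.5: the explicit formula for `C_{n,p,d}²/C_{n,p,2d}`, and its asymptotic expansion
`1 + d²/(pn) + O_{p,d}(n⁻²)`. -/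
theorem asymptotics_of_Cnpd_ratio (p : ℝ) (hp : 1 ≤ p) (d : ℕ) :
    (∀ n : ℕ, Cnpd n p d ^ 2 / Cnpd n p (2 * d)
      = ((n : ℝ) * ((n : ℝ) + 2 * d) / ((n : ℝ) + d) ^ 2) *
        (Real.Gamma ((n : ℝ) / p) * Real.Gamma (((n : ℝ) + 2 * d) / p) /
          Real.Gamma (((n : ℝ) + d) / p) ^ 2)) ∧
    (∃ K : ℝ, 0 ≤ K ∧ ∃ N : ℕ, ∀ n : ℕ, N ≤ n →
      |Cnpd n p d ^ 2 / Cnpd n p (2 * d) - 1 - (d : ℝ) ^ 2 / (p * n)| ≤ K / (n : ℝ) ^ 2) := by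
  have hp0 : 0 < p := by linarith
  refine ⟨Cnpd_sq_div_Cnpd_two_mul hp0 d, _, by positivity,
    ⌈p * (((d : ℝ) / p) ^ 2 + 2)⌉₊, fun n hn =>
      abs_Cnpd_sq_div_Cnpd_two_mul_sub_le hp0 d n (Nat.ceil_le.1 hn)⟩
end
end

section
/- Let d ≥ 1, p ≥ 1, n ∈ ℕ, and let f : ℝ^n → ℝ be a degree-d homogeneous polynomial. Then Cov_{μ_{n,p}}(f, x ↦ ‖x‖_p^d) = R_{n,p}^d · (d²/((n+2d)(n+d))) · ∫ f dμ_{n,p}, where ‖x‖_p := (Σ_{i=1}^n |x_i|^p)^{1/p}. -/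
/-!
Write `‖x‖ = (∑ |x_i|^p)^{1/p}` and `B_R = {‖x‖ ≤ R}`. If `g` is positively homogeneous of degree
`δ`, the dilation `x ↦ c • x` gives `∫_{B_s} g = (s/R)^{n+δ} ∫_{B_R} g`. Writing
`R^d - ‖x‖^d = ∫_{‖x‖}^R d s^{d-1} ds` and exchanging the two integrals (layer cake) then yields
`(n + δ + d) ∫_{B_R} g ‖x‖^d = R^d (n + δ) ∫_{B_R} g`. Applied to `f` (`δ = d`) and to `1`
(`δ = 0`) this expresses both integrals of the covariance through `∫ f` and the volume of the
ball, and `(n + d)² - n (n + 2d) = d²` produces the constant.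
-/

open MeasureTheory Set
open scoped Pointwise

noncomputable section

def IsPosHomogeneous {E : Type*} [SMul ℝ E] (g : E → ℝ) (δ : ℕ) : Prop :=
  ∀ ⦃c : ℝ⦄, 0 < c → ∀ x, g (c • x) = c ^ δ * g x

theorem MvPolynomial.IsHomogeneous.eval_smul {σ R : Type*} [CommSemiring R]
    {f : MvPolynomial σ R} {d : ℕ} (hf : f.IsHomogeneous d) (c : R) (x : σ → R) :
    eval (c • x) f = c ^ d * eval x f := by
  simp only [eval_eq, Finset.mul_sum, Pi.smul_apply, smul_eq_mul, mul_pow,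
    Finset.prod_mul_distrib, Finset.prod_pow_eq_pow_sum]
  refine Finset.sum_congr rfl fun m hm => ?_
  rw [← hf.degree_eq_sum_deg_support hm]
  ring

theorem MvPolynomial.IsHomogeneous.isPosHomogeneous_eval {σ : Type*} {f : MvPolynomial σ ℝ}
    {d : ℕ} (hf : f.IsHomogeneous d) : IsPosHomogeneous (fun x => eval x f) d :=
  fun c _ x => hf.eval_smul c x

theorem IsPosHomogeneous.setOf_le_mul {E : Type*} [AddCommGroup E] [Module ℝ E] {N : E → ℝ}
    (hN : IsPosHomogeneous N 1) {c : ℝ} (hc : 0 < c) (r : ℝ) :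
    {x | N x ≤ c * r} = c • {x | N x ≤ r} := by
  ext x
  rw [mem_smul_set_iff_inv_smul_mem₀ hc.ne', mem_ofPred_eq, mem_ofPred_eq,
    hN (inv_pos.2 hc), pow_one, inv_mul_le_iff₀ hc]

theorem IsPosHomogeneous.setIntegral_smul_set {E : Type*} [NormedAddCommGroup E]
    [NormedSpace ℝ E] [FiniteDimensional ℝ E] [MeasurableSpace E] [BorelSpace E]
    (μ : Measure E) [μ.IsAddHaarMeasure] {g : E → ℝ} {δ : ℕ} (hg : IsPosHomogeneous g δ)
    {c : ℝ} (hc : 0 < c) (s : Set E) :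
    ∫ x in c • s, g x ∂μ = c ^ (Module.finrank ℝ E + δ) * ∫ x in s, g x ∂μ := by
  have h := Measure.setIntegral_comp_smul_of_pos μ g s hc
  simp only [hg hc, integral_const_mul, smul_eq_mul] at h
  rw [pow_add, mul_assoc, h, ← mul_assoc, mul_inv_cancel₀ (pow_pos hc _).ne', one_mul]

theorem setIntegral_Icc_indicator_Ici_deriv_pow (d : ℕ) {t R : ℝ} (ht : 0 ≤ t) (htR : t ≤ R) :
    ∫ s in Icc 0 R, (Ici t).indicator (fun s => d * s ^ (d - 1)) s = R ^ d - t ^ d := by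
  have hinter : Icc 0 R ∩ Ici t = Icc t R := by
    ext s
    simp only [mem_inter_iff, mem_Icc, mem_Ici]
    grind
  rw [setIntegral_indicator measurableSet_Ici, hinter, integral_Icc_eq_integral_Ioc,
    ← intervalIntegral.integral_of_le htR]
  exact intervalIntegral.integral_eq_sub_of_hasDerivAt (fun s _ => hasDerivAt_pow d s)
    ((by fun_prop : Continuous fun s : ℝ => (d : ℝ) * s ^ (d - 1)).intervalIntegrable _ _)

theorem add_mul_integral_deriv_pow_mul_pow (k d : ℕ) (R : ℝ) :
    (k + d) * ∫ s in (0 : ℝ)..R, d * s ^ (d - 1) * s ^ k = d * R ^ (k + d) := by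
  rcases d with _ | e
  · simp
  have hpow : ∀ s : ℝ, ((e + 1 : ℕ) : ℝ) * s ^ (e + 1 - 1) * s ^ k = (e + 1) * s ^ (k + e) := by
    intro s
    push_cast
    rw [mul_assoc, ← pow_add, add_comm e k]
  simp only [hpow, intervalIntegral.integral_const_mul, integral_pow]
  have : (k : ℝ) + (e + 1 : ℕ) ≠ 0 := by positivity
  field_simp
  push_cast
  ring

section LayerCake

variable {E : Type*} {N g : E → ℝ}

def layerCake (N g : E → ℝ) (d : ℕ) (s : ℝ) (x : E) : ℝ :=
  d * s ^ (d - 1) * {y | N y ≤ s}.indicator g x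

theorem setIntegral_Icc_layerCake (d : ℕ) {R : ℝ} {x : E} (hx0 : 0 ≤ N x) (hxR : N x ≤ R) :
    ∫ s in Icc 0 R, layerCake N g d s x = (R ^ d - N x ^ d) * g x := by
  have h : ∀ s, layerCake N g d s x = (Ici (N x)).indicator (fun s => d * s ^ (d - 1)) s * g x := by
    intro s
    by_cases hs : N x ≤ s <;> simp [layerCake, indicator, hs]
  simp only [h, integral_mul_const, setIntegral_Icc_indicator_Ici_deriv_pow d hx0 hxR]

theorem integrable_layerCake [MeasurableSpace E] {μ : Measure E} (hNm : Measurable N) {R : ℝ}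
    (hg : IntegrableOn g {x | N x ≤ R} μ) (d : ℕ) :
    Integrable (Function.uncurry (layerCake N g d))
      ((volume.restrict (Icc 0 R)).prod (μ.restrict {x | N x ≤ R})) := by
  have hφ : Integrable (fun s : ℝ => (d : ℝ) * s ^ (d - 1)) (volume.restrict (Icc 0 R)) :=
    (by fun_prop : Continuous fun s : ℝ => (d : ℝ) * s ^ (d - 1)).integrableOn_Icc
  refine (hφ.norm.mul_prod hg.norm).mono' ?_ (Filter.Eventually.of_forall fun q => ?_)
  · have hmeas : MeasurableSet {q : ℝ × E | N q.2 ≤ q.1} :=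
      measurableSet_le (hNm.comp measurable_snd) measurable_fst
    exact (hφ.aestronglyMeasurable.comp_fst).mul
      ((hg.aestronglyMeasurable.comp_snd).indicator hmeas)
  · simp only [Function.uncurry, layerCake, norm_mul]
    gcongr
    exact norm_indicator_le_norm_self g q.2

variable [NormedAddCommGroup E] [NormedSpace ℝ E] [FiniteDimensional ℝ E] [MeasurableSpace E]
  [BorelSpace E] (μ : Measure E) [μ.IsAddHaarMeasure]

theorem IsPosHomogeneous.setIntegral_layerCake (hN : IsPosHomogeneous N 1) (hNm : Measurable N)
    {δ : ℕ} (hg : IsPosHomogeneous g δ) (d : ℕ) {s R : ℝ} (hs : 0 < s) (hsR : s ≤ R) :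
    ∫ x in {x | N x ≤ R}, layerCake N g d s x ∂μ
      = d * s ^ (d - 1) * (s / R) ^ (Module.finrank ℝ E + δ) * ∫ x in {x | N x ≤ R}, g x ∂μ := by
  have hR : 0 < R := hs.trans_le hsR
  have hsub : {x | N x ≤ R} ∩ {x | N x ≤ s} = {x | N x ≤ s} :=
    inter_eq_self_of_subset_right fun x hx => le_trans hx hsR
  have hscale : {x | N x ≤ s} = (s / R) • {x | N x ≤ R} := by
    rw [← hN.setOf_le_mul (div_pos hs hR), div_mul_cancel₀ s hR.ne']
  simp only [layerCake]
  rw [integral_const_mul, setIntegral_indicator (measurableSet_le hNm measurable_const), hsub,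
    hscale, hg.setIntegral_smul_set μ (div_pos hs hR)]
  ring

theorem IsPosHomogeneous.mul_setIntegral_mul_pow (hN : IsPosHomogeneous N 1) (hNm : Measurable N)
    (hN0 : ∀ x, 0 ≤ N x) {δ : ℕ} (hg : IsPosHomogeneous g δ) {R : ℝ} (hR : 0 < R)
    (hgi : IntegrableOn g {x | N x ≤ R} μ) (d : ℕ) :
    (Module.finrank ℝ E + δ + d) * ∫ x in {x | N x ≤ R}, g x * N x ^ d ∂μ
      = R ^ d * (Module.finrank ℝ E + δ) * ∫ x in {x | N x ≤ R}, g x ∂μ := by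
  set B := {x | N x ≤ R}
  set k := Module.finrank ℝ E + δ
  set I := ∫ x in B, g x ∂μ
  have hB : MeasurableSet B := measurableSet_le hNm measurable_const
  have hNB : ∀ᵐ x ∂μ.restrict B, ‖N x ^ d‖ ≤ R ^ d :=
    (ae_restrict_iff' hB).2 <| Filter.Eventually.of_forall fun x hx => by
      rw [norm_pow, Real.norm_of_nonneg (hN0 x)]
      exact pow_le_pow_left₀ (hN0 x) hx d
  have hgN : IntegrableOn (fun x => g x * N x ^ d) B μ := hgi.mul_bdd (by fun_prop) hNB
  have hcake : ∫ x in B, (R ^ d - N x ^ d) * g x ∂μ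
      = ∫ s in 0..R, d * s ^ (d - 1) * (s / R) ^ k * I := by
    rw [← setIntegral_congr_fun hB fun x hx => setIntegral_Icc_layerCake d (hN0 x) hx,
      ← integral_integral_swap (integrable_layerCake hNm hgi d), integral_Icc_eq_integral_Ioc,
      intervalIntegral.integral_of_le hR.le]
    exact setIntegral_congr_fun measurableSet_Ioc fun s hs =>
      hN.setIntegral_layerCake μ hNm hg d hs.1 hs.2
  have hradial : (k + d) * ∫ s in 0..R, d * s ^ (d - 1) * (s / R) ^ k * I = d * R ^ d * I := by
    simp only [div_pow, show ∀ s : ℝ, d * s ^ (d - 1) * (s ^ k / R ^ k) * I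
      = d * s ^ (d - 1) * s ^ k * (I / R ^ k) from fun s => by ring,
      intervalIntegral.integral_mul_const]
    rw [← mul_assoc, add_mul_integral_deriv_pow_mul_pow, pow_add]
    field_simp
  have hsplit : ∫ x in B, (R ^ d - N x ^ d) * g x ∂μ = R ^ d * I - ∫ x in B, g x * N x ^ d ∂μ := by
    simp only [show ∀ x, (R ^ d - N x ^ d) * g x = R ^ d * g x - g x * N x ^ d from
      fun x => by ring]
    rw [integral_sub (hgi.const_mul _) hgN, integral_const_mul]
  have hk : (k : ℝ) = Module.finrank ℝ E + δ := by push_cast [k]; rfl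
  rw [← hk]
  linear_combination -(k + d) * hsplit.symm.trans hcake - hradial

end LayerCake

section PNorm

variable {ι : Type*} [Fintype ι] {p : ℝ}

def pNorm (p : ℝ) (x : ι → ℝ) : ℝ := (∑ i, |x i| ^ p) ^ (1 / p)

theorem sum_abs_rpow_nonneg (p : ℝ) (x : ι → ℝ) : 0 ≤ ∑ i, |x i| ^ p := by positivity

theorem pNorm_nonneg (p : ℝ) (x : ι → ℝ) : 0 ≤ pNorm p x := by unfold pNorm; positivity

theorem continuous_pNorm (hp : 0 < p) : Continuous (pNorm (ι := ι) p) := by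
  unfold pNorm
  exact (continuous_finsetSum _ fun i _ => (continuous_apply i).abs.rpow_const
    fun _ => Or.inr hp.le).rpow_const fun _ => Or.inr (by positivity)

theorem isPosHomogeneous_pNorm (hp : 0 < p) : IsPosHomogeneous (pNorm (ι := ι) p) 1 := by
  intro c hc x
  simp only [pNorm, Pi.smul_apply, smul_eq_mul, abs_mul, abs_of_pos hc,
    Real.mul_rpow hc.le (abs_nonneg _), ← Finset.mul_sum, pow_one]
  rw [Real.mul_rpow (by positivity) (sum_abs_rpow_nonneg p x), one_div,
    Real.rpow_rpow_inv hc.le hp.ne']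

theorem pNorm_pow (p : ℝ) (x : ι → ℝ) (d : ℕ) :
    pNorm p x ^ d = (∑ i, |x i| ^ p) ^ ((d : ℝ) / p) := by
  rw [pNorm, ← Real.rpow_natCast, ← Real.rpow_mul (sum_abs_rpow_nonneg p x), one_div_mul_eq_div]

theorem setOf_sum_abs_rpow_le_rpow (hp : 0 < p) {R : ℝ} (hR : 0 ≤ R) :
    {x : ι → ℝ | ∑ i, |x i| ^ p ≤ R ^ p} = {x | pNorm p x ≤ R} := by
  ext x
  rw [mem_ofPred_eq, mem_ofPred_eq, pNorm, one_div,
    Real.rpow_inv_le_iff_of_pos (sum_abs_rpow_nonneg p x) hR hp]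

theorem abs_le_pNorm (hp : 0 < p) (x : ι → ℝ) (i : ι) : |x i| ≤ pNorm p x := by
  calc |x i| = (|x i| ^ p) ^ (1 / p) := by
        rw [one_div, Real.rpow_rpow_inv (abs_nonneg _) hp.ne']
    _ ≤ pNorm p x := Real.rpow_le_rpow (by positivity)
        (Finset.single_le_sum (f := fun j => |x j| ^ p) (fun j _ => by positivity)
          (Finset.mem_univ i)) (by positivity)

theorem isCompact_setOf_pNorm_le (hp : 0 < p) {R : ℝ} (hR : 0 ≤ R) :
    IsCompact {x : ι → ℝ | pNorm p x ≤ R} :=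
  (isCompact_closedBall 0 R).of_isClosed_subset
    (isClosed_le (continuous_pNorm hp) continuous_const) fun x hx => by
      rw [Metric.mem_closedBall, dist_zero_right, pi_norm_le_iff_of_nonneg hR]
      exact fun i => (abs_le_pNorm hp x i).trans hx

end PNorm

theorem Rnp_pos {n : ℕ} {p : ℝ} (hn : 1 ≤ n) (hp : 0 < p) : 0 < Rnp n p := by
  have : (0 : ℝ) < n := by exact_mod_cast hn
  unfold Rnp
  positivity

theorem lpBall_eq_setOf_pNorm_le {n : ℕ} {p : ℝ} (hn : 1 ≤ n) (hp : 0 < p) :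
    lpBall n p = {x | pNorm p x ≤ Rnp n p} :=
  setOf_sum_abs_rpow_le_rpow hp (Rnp_pos hn hp).le

theorem volume_real_lpBall_pos {n : ℕ} {p : ℝ} (hn : 1 ≤ n) (hp : 1 ≤ p) :
    0 < volume.real (lpBall n p) := by
  have : Nonempty (Fin n) := ⟨⟨0, hn⟩⟩
  rw [measureReal_def, lpBall_eq_setOf_pNorm_le hn (by linarith)]
  simp only [pNorm]
  rw [volume_sum_rpow_le _ hp]
  have := Rnp_pos hn (by linarith : 0 < p)
  rw [ENNReal.toReal_mul, ENNReal.toReal_pow, ENNReal.toReal_ofReal this.le,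
    ENNReal.toReal_ofReal (by positivity)]
  positivity

theorem integral_muNP (n : ℕ) (p : ℝ) (h : (Fin n → ℝ) → ℝ) :
    ∫ x, h x ∂muNP n p = (volume.real (lpBall n p))⁻¹ * ∫ x in lpBall n p, h x := by
  rw [muNP, integral_smul_measure, ENNReal.toReal_inv, smul_eq_mul, measureReal_def]

theorem IsPosHomogeneous.mul_setIntegral_lpBall_mul_pNorm_pow {n : ℕ} (hn : 1 ≤ n) {p : ℝ}
    (hp : 0 < p) {g : (Fin n → ℝ) → ℝ} {δ : ℕ} (hg : IsPosHomogeneous g δ) (hgc : Continuous g)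
    (d : ℕ) :
    (n + δ + d) * ∫ x in lpBall n p, g x * pNorm p x ^ d
      = Rnp n p ^ d * (n + δ) * ∫ x in lpBall n p, g x := by
  have hR := Rnp_pos hn hp
  have hgi := hgc.continuousOn.integrableOn_compact (μ := volume)
    (isCompact_setOf_pNorm_le hp hR.le)
  have h := (isPosHomogeneous_pNorm hp).mul_setIntegral_mul_pow volume
    (continuous_pNorm hp).measurable (pNorm_nonneg p) hg hR hgi d
  rwa [Module.finrank_fin_fun, ← lpBall_eq_setOf_pNorm_le hn hp] at h

theorem covariance_with_p_norm_general (d : ℕ) (p : ℝ) (hp : 1 ≤ p) (n : ℕ) (hn : 1 ≤ n)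
    (f : MvPolynomial (Fin n) ℝ) (hf : f.IsHomogeneous d) :
    (∫ x, MvPolynomial.eval x f * (∑ i, |x i| ^ p) ^ ((d : ℝ) / p) ∂(muNP n p))
      - (∫ x, MvPolynomial.eval x f ∂(muNP n p)) *
          (∫ x, (∑ i, |x i| ^ p) ^ ((d : ℝ) / p) ∂(muNP n p))
      = Rnp n p ^ d * ((d : ℝ) ^ 2 / ((((n : ℝ) + 2 * d)) * ((n : ℝ) + d))) *
          ∫ x, MvPolynomial.eval x f ∂(muNP n p) := by
  have hp0 : 0 < p := by linarith
  have hn0 : (0 : ℝ) < n := by exact_mod_cast hn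
  have hfN := hf.isPosHomogeneous_eval.mul_setIntegral_lpBall_mul_pNorm_pow hn hp0
    (MvPolynomial.continuous_eval f) d
  have h1N := IsPosHomogeneous.mul_setIntegral_lpBall_mul_pNorm_pow (g := fun _ => 1) (δ := 0)
    hn hp0 (fun c _ x => by simp) continuous_const d
  simp only [CharP.cast_eq_zero, add_zero, one_mul, setIntegral_const, smul_eq_mul,
    mul_one] at h1N
  have hfN' : ∫ x in lpBall n p, MvPolynomial.eval x f * pNorm p x ^ d
      = Rnp n p ^ d * (n + d) / (n + 2 * d) * ∫ x in lpBall n p, MvPolynomial.eval x f := by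
    rw [div_mul_eq_mul_div, eq_div_iff (by positivity)]
    linear_combination hfN
  have h1N' : ∫ x in lpBall n p, pNorm p x ^ d
      = Rnp n p ^ d * n / (n + d) * volume.real (lpBall n p) := by
    rw [div_mul_eq_mul_div, eq_div_iff (by positivity)]
    linear_combination h1N
  have hV := (volume_real_lpBall_pos hn hp).ne'
  simp only [integral_muNP, ← pNorm_pow, hfN', h1N']
  field_simp
  ring

/-- Lemma 2.8: the covariance of a degree-`d` homogeneous polynomial with `‖x‖_p^d` under
`μ_{n,p}` equals `R_{n,p}^d · d²/((n+2d)(n+d)) · E f`.  Here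
`‖x‖_p^d = (Σ |x_i|^p)^{d/p}` and `Cov(f,g) = ∫ fg - (∫f)(∫g)`. -/
theorem covariance_with_p_norm (d : ℕ) (hd : 1 ≤ d) (p : ℝ) (hp : 1 ≤ p) (n : ℕ) (hn : 1 ≤ n)
    (f : MvPolynomial (Fin n) ℝ) (hf : f.IsHomogeneous d) :
    (∫ x, MvPolynomial.eval x f * (∑ i, |x i| ^ p) ^ ((d : ℝ) / p) ∂(muNP n p))
      - (∫ x, MvPolynomial.eval x f ∂(muNP n p)) *
          (∫ x, (∑ i, |x i| ^ p) ^ ((d : ℝ) / p) ∂(muNP n p))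
      = Rnp n p ^ d * ((d : ℝ) ^ 2 / ((((n : ℝ) + 2 * d)) * ((n : ℝ) + d))) *
          ∫ x, MvPolynomial.eval x f ∂(muNP n p) :=
  covariance_with_p_norm_general d p hp n hn f hf
end
end

section
/- For n ∈ ℕ, let μ_n := μ_{n,2} ⊗ μ_{n,2} be the product on ℝ^{2n} of two copies of the uniform measure on the n-dimensional isotropic Euclidean ball, and define f_n : ℝ^{2n} → ℝ by f_n(x) = (1/√(2n)) (x₁² + ⋯ + x_n² − x_{n+1}² − ⋯ − x_{2n}²). Then for every n ∈ ℕ: Var_{μ_n}(f_n) ≤ 4/n, and μ_n({x : |f_n(x)| < 4/√n}) ≥ 3/4. Consequently, there are no constants C > 0 and α > 0 (independent of n) such that μ_n({x : |f_n(x)| < ε}) ≤ C ε^α for all n and all ε > 0. -/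
open MeasureTheory

noncomputable section

/-- The product of two copies of the uniform measure on the isotropic Euclidean ball. -/
def muProd (n : ℕ) : Measure ((Fin n → ℝ) × (Fin n → ℝ)) :=
  (muNP n 2).prod (muNP n 2)

/-- The polynomial `f_n(x) = (2n)^{-1/2}(x₁² + ⋯ + x_n² - x_{n+1}² - ⋯ - x_{2n}²)`, viewed
as a function on the product space. -/
def fBad (n : ℕ) (z : (Fin n → ℝ) × (Fin n → ℝ)) : ℝ :=
  (Real.sqrt (2 * n))⁻¹ * ((∑ i, z.1 i ^ 2) - ∑ i, z.2 i ^ 2)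

/-! Under the uniform measure on the ball of radius `√(n + 2)` in `ℝⁿ`, polar coordinates give
`E |x|^(2k) = n (n + 2)^k / (n + 2k)`, so `|x|²` has mean `n` and variance `4n / (n + 4)`.
As `f_n = (2n)^(-1/2) (|x|² - |y|²)` with `x`, `y` independent, `f_n` has mean `0` and variance
`4 / (n + 4) ≤ 4 / n`, and Chebyshev's inequality gives `μ_n (|f_n| ≥ 4 / √n) ≤ 1 / 4`.
Since `4 / √n → 0`, a bound `C ε^α` would force these probabilities to tend to `0`. -/

open ProbabilityTheory Metric Set Filter Topology Module

lemma MeasureTheory.MeasurePreserving.cond_preimage {α β : Type*} [MeasurableSpace α]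
    [MeasurableSpace β] {μ : Measure α} {ν : Measure β} {f : α → β}
    (hf : MeasurePreserving f μ ν) {s : Set β} (hs : MeasurableSet s) :
    MeasurePreserving f μ[|f ⁻¹' s] ν[|s] := by
  refine ⟨hf.measurable, Measure.ext fun t ht => ?_⟩
  rw [Measure.map_apply hf.measurable ht, cond_apply (hf.measurable hs), cond_apply hs,
    ← preimage_inter, hf.measure_preimage hs.nullMeasurableSet,
    hf.measure_preimage (hs.inter ht).nullMeasurableSet]

section NormMoments

variable {E : Type*} [NormedAddCommGroup E] [NormedSpace ℝ E] [MeasurableSpace E]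
  [FiniteDimensional ℝ E] (μ : Measure E) [μ.IsAddHaarMeasure]

lemma isProbabilityMeasure_cond_closedBall {R : ℝ} (hR : 0 < R) :
    IsProbabilityMeasure μ[|closedBall (0 : E) R] :=
  cond_isProbabilityMeasure_of_finite (measure_closedBall_pos μ 0 hR).ne'
    measure_closedBall_lt_top.ne

variable [BorelSpace E] [Nontrivial E]

lemma setIntegral_closedBall_norm_pow (m : ℕ) {R : ℝ} (hR : 0 ≤ R) :
    ∫ x in closedBall (0 : E) R, ‖x‖ ^ m ∂μ
      = finrank ℝ E * μ.real (ball 0 1) * (R ^ (finrank ℝ E + m) / (finrank ℝ E + m)) := by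
  have hexp : finrank ℝ E - 1 + m + 1 = finrank ℝ E + m := by
    have : 0 < finrank ℝ E := finrank_pos
    omega
  have hcast : ((finrank ℝ E - 1 + m : ℕ) : ℝ) + 1 = finrank ℝ E + m := by exact_mod_cast hexp
  have hind : (closedBall (0 : E) R).indicator (‖·‖ ^ m)
      = fun x => (Iic R).indicator (· ^ m) ‖x‖ := by
    ext x
    simp only [indicator, mem_closedBall_zero_iff, mem_Iic]
  have hradial : ∫ r in Ioi (0 : ℝ), r ^ (finrank ℝ E - 1) • (Iic R).indicator (· ^ m) r
      = ∫ r in (0 : ℝ)..R, r ^ (finrank ℝ E - 1 + m) := by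
    rw [intervalIntegral.integral_of_le hR, ← integral_indicator measurableSet_Ioc,
      ← integral_indicator measurableSet_Ioi]
    congr 1 with r
    by_cases h0 : 0 < r <;> by_cases h1 : r ≤ R <;> simp [indicator, h0, h1, pow_add]
  rw [← integral_indicator measurableSet_closedBall, hind, integral_fun_norm_addHaar μ,
    hradial, integral_pow, hexp, hcast]
  simp [zero_pow (by omega : finrank ℝ E + m ≠ 0), mul_assoc]

lemma integral_cond_closedBall_norm_pow (m : ℕ) {R : ℝ} (hR : 0 < R) :
    ∫ x, ‖x‖ ^ m ∂μ[|closedBall (0 : E) R] = finrank ℝ E / (finrank ℝ E + m) * R ^ m := by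
  have hball : 0 < μ.real (ball (0 : E) 1) :=
    ENNReal.toReal_pos (measure_ball_pos μ 0 one_pos).ne' measure_ball_lt_top.ne
  rw [ProbabilityTheory.cond, integral_smul_measure, setIntegral_closedBall_norm_pow μ m hR.le,
    ENNReal.toReal_inv, ← measureReal_def, Measure.addHaar_real_closedBall μ 0 hR.le, smul_eq_mul,
    pow_add]
  field_simp

end NormMoments

section EuclideanBall

variable {n : ℕ}

lemma Rnp_two_sq (hn : 0 < n) : Rnp n 2 ^ 2 = n + 2 := by
  have hn0 : (0 : ℝ) < n := by exact_mod_cast hn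
  have hΓn : Real.Gamma ((n + 2) / 2) = n / 2 * Real.Gamma (n / 2) := by
    rw [show ((n : ℝ) + 2) / 2 = n / 2 + 1 by ring, Real.Gamma_add_one (by positivity)]
  have hΓ3 : Real.Gamma (3 / 2) = 1 / 2 * Real.Gamma (1 / 2) := by
    rw [show (3 : ℝ) / 2 = 1 / 2 + 1 by norm_num, Real.Gamma_add_one (by norm_num)]
  have hΓn0 := (Real.Gamma_pos_of_pos (by positivity : (0 : ℝ) < n / 2)).ne'
  have hΓ10 := (Real.Gamma_pos_of_pos (by norm_num : (0 : ℝ) < 1 / 2)).ne'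
  rw [Rnp, Real.sq_sqrt (by positivity), hΓn, hΓ3]
  field_simp

lemma lpBall_two (hn : 0 < n) : lpBall n 2 = {x | ∑ i, x i ^ 2 ≤ (n : ℝ) + 2} := by
  ext x
  simp only [lpBall, mem_ofPred_eq, Real.rpow_two, sq_abs, Rnp_two_sq hn]

lemma measurableSet_lpBall_two (hn : 0 < n) : MeasurableSet (lpBall n 2) := by
  rw [lpBall_two hn]
  exact measurableSet_le (by fun_prop) measurable_const

lemma ofLp_preimage_lpBall_two (hn : 0 < n) :
    WithLp.ofLp ⁻¹' lpBall n 2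
      = closedBall (0 : EuclideanSpace ℝ (Fin n)) (Real.sqrt (n + 2)) := by
  ext x
  rw [lpBall_two hn, mem_preimage, mem_ofPred_eq, mem_closedBall_zero_iff,
    ← Real.sqrt_le_sqrt_iff (by positivity), EuclideanSpace.norm_eq]
  simp [Real.norm_eq_abs, sq_abs]

lemma measurePreserving_ofLp_muNP_two (hn : 0 < n) :
    MeasurePreserving WithLp.ofLp
      volume[|closedBall (0 : EuclideanSpace ℝ (Fin n)) (Real.sqrt (n + 2))] (muNP n 2) := by
  rw [← ofLp_preimage_lpBall_two hn]
  exact (PiLp.volume_preserving_ofLp (Fin n)).cond_preimage (measurableSet_lpBall_two hn)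

lemma isProbabilityMeasure_muNP_two (hn : 0 < n) : IsProbabilityMeasure (muNP n 2) := by
  have := isProbabilityMeasure_cond_closedBall (volume : Measure (EuclideanSpace ℝ (Fin n)))
    (Real.sqrt_pos.mpr (by positivity : (0 : ℝ) < n + 2))
  have hofLp := measurePreserving_ofLp_muNP_two hn
  rw [← hofLp.map_eq]
  exact Measure.isProbabilityMeasure_map hofLp.measurable.aemeasurable

lemma integral_muNP_two_sum_sq_pow (hn : 0 < n) (k : ℕ) :
    ∫ x, (∑ i, x i ^ 2) ^ k ∂(muNP n 2) = n / (n + 2 * k) * ((n : ℝ) + 2) ^ k := by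
  have : Nontrivial (EuclideanSpace ℝ (Fin n)) := by
    have : Nonempty (Fin n) := ⟨⟨0, hn⟩⟩
    infer_instance
  have hR : 0 < Real.sqrt (n + 2) := Real.sqrt_pos.mpr (by positivity)
  rw [← (measurePreserving_ofLp_muNP_two hn).integral_comp
    (MeasurableEquiv.toLp 2 (Fin n → ℝ)).symm.measurableEmbedding]
  simp_rw [← EuclideanSpace.real_norm_sq_eq, ← pow_mul]
  rw [integral_cond_closedBall_norm_pow _ _ hR, finrank_euclideanSpace_fin, pow_mul,
    Real.sq_sqrt (by positivity), Nat.cast_mul, Nat.cast_ofNat]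

lemma memLp_muNP_two_sum_sq (hn : 0 < n) (p : ENNReal) :
    MemLp (fun x : Fin n → ℝ => ∑ i, x i ^ 2) p (muNP n 2) := by
  have := isProbabilityMeasure_muNP_two hn
  refine MemLp.of_bound (by fun_prop : Continuous _).aestronglyMeasurable ((n : ℝ) + 2) ?_
  filter_upwards [ae_cond_mem (measurableSet_lpBall_two hn)] with x hx
  rw [lpBall_two hn] at hx
  rwa [Real.norm_of_nonneg (by positivity)]

lemma variance_muNP_two_sum_sq (hn : 0 < n) :
    Var[fun x : Fin n → ℝ => ∑ i, x i ^ 2; muNP n 2] = 4 * n / (n + 4) := by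
  have := isProbabilityMeasure_muNP_two hn
  rw [variance_eq_sub (memLp_muNP_two_sum_sq hn 2)]
  have h1 := integral_muNP_two_sum_sq_pow hn 1
  have h2 := integral_muNP_two_sum_sq_pow hn 2
  simp only [pow_one, Nat.cast_one, Nat.cast_ofNat] at h1 h2
  simp only [Pi.pow_apply, h1, h2]
  field_simp
  ring

end EuclideanBall

section Probability

variable {Ω : Type*} [MeasurableSpace Ω] {μ : Measure Ω} [IsProbabilityMeasure μ] {X : Ω → ℝ}

lemma mVar_eq_variance (hX : MemLp X 2 μ) : mVar μ X = Var[X; μ] :=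
  (variance_eq_sub hX).symm

lemma one_sub_variance_div_sq_le_measureReal_abs_sub_lt (hX : MemLp X 2 μ) {c : ℝ} (hc : 0 < c) :
    1 - Var[X; μ] / c ^ 2 ≤ μ.real {ω | |X ω - μ[X]| < c} := by
  have hcheb : μ.real {ω | c ≤ |X ω - μ[X]|} ≤ Var[X; μ] / c ^ 2 :=
    ENNReal.toReal_le_of_le_ofReal (div_nonneg (variance_nonneg _ _) (sq_nonneg c))
      (meas_ge_le_variance_div_sq hX hc)
  have hunion : {ω | c ≤ |X ω - μ[X]|} ∪ {ω | |X ω - μ[X]| < c} = univ := by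
    ext ω
    simp [le_or_gt]
  have := measureReal_union_le (μ := μ) {ω | c ≤ |X ω - μ[X]|} {ω | |X ω - μ[X]| < c}
  rw [hunion, probReal_univ] at this
  linarith

lemma integral_sub_prod_self (hX : Integrable X μ) : ∫ z, X z.1 - X z.2 ∂(μ.prod μ) = 0 := by
  rw [integral_sub (hX.comp_fst μ) (hX.comp_snd μ), integral_fun_fst, integral_fun_snd, sub_self]

lemma variance_sub_prod_self (hX : MemLp X 2 μ) :
    Var[fun z => X z.1 - X z.2; μ.prod μ] = 2 * Var[X; μ] := by
  have h := variance_add_prod hX hX.neg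
  simp only [Pi.neg_apply, ← sub_eq_add_neg, variance_neg] at h
  rw [h, two_mul]

end Probability

section BadPolynomial

variable {n : ℕ}

lemma isProbabilityMeasure_muProd (hn : 0 < n) : IsProbabilityMeasure (muProd n) := by
  have := isProbabilityMeasure_muNP_two hn
  unfold muProd
  infer_instance

lemma memLp_fBad (hn : 0 < n) : MemLp (fBad n) 2 (muProd n) := by
  have := isProbabilityMeasure_muNP_two hn
  have hS := memLp_muNP_two_sum_sq hn 2
  exact ((hS.comp_fst _).sub (hS.comp_snd _)).const_mul _

lemma integral_fBad (hn : 0 < n) : ∫ z, fBad n z ∂(muProd n) = 0 := by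
  have := isProbabilityMeasure_muNP_two hn
  unfold fBad
  rw [integral_const_mul, muProd,
    integral_sub_prod_self ((memLp_muNP_two_sum_sq hn 1).integrable le_rfl), mul_zero]

lemma variance_fBad (hn : 0 < n) : Var[fBad n; muProd n] = 4 / (n + 4) := by
  have := isProbabilityMeasure_muNP_two hn
  have hn0 : (0 : ℝ) < n := by exact_mod_cast hn
  unfold fBad
  rw [variance_const_mul, muProd, variance_sub_prod_self (memLp_muNP_two_sum_sq hn 2),
    variance_muNP_two_sum_sq hn, inv_pow, Real.sq_sqrt (by positivity)]
  field_simp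

lemma mVar_fBad_le (hn : 0 < n) : mVar (muProd n) (fBad n) ≤ 4 / n := by
  have := isProbabilityMeasure_muProd hn
  have hn0 : (0 : ℝ) < n := by exact_mod_cast hn
  rw [mVar_eq_variance (memLp_fBad hn), variance_fBad hn]
  gcongr
  linarith

lemma three_quarters_le_muProd_abs_fBad_lt (hn : 0 < n) :
    3 / 4 ≤ (muProd n).real {z | |fBad n z| < 4 / Real.sqrt n} := by
  have := isProbabilityMeasure_muProd hn
  have hn0 : (0 : ℝ) < n := by exact_mod_cast hn
  have hcheb := one_sub_variance_div_sq_le_measureReal_abs_sub_lt (memLp_fBad hn)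
    (by positivity : 0 < 4 / Real.sqrt n)
  simp only [integral_fBad hn, sub_zero, variance_fBad hn, div_pow, Real.sq_sqrt hn0.le] at hcheb
  refine le_trans ?_ hcheb
  field_simp
  linarith

end BadPolynomial

/-- Section 5.1: the polynomial `f_n` on the product of two isotropic Euclidean balls has
variance at most `4/n`, yet `|f_n| < 4/√n` with probability at least `3/4`.  Consequently
there is no dimension-free anti-concentration bound `μ_n(|f_n| < ε) ≤ C ε^α`. -/
theorem product_of_balls_pathological_polynomial :
    (∀ n : ℕ, 1 ≤ n →
      mVar (muProd n) (fBad n) ≤ 4 / n ∧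
      3 / 4 ≤ ((muProd n) {z | |fBad n z| < 4 / Real.sqrt n}).toReal) ∧
    ¬ ∃ C : ℝ, 0 < C ∧ ∃ α : ℝ, 0 < α ∧
        ∀ n : ℕ, 1 ≤ n → ∀ ε : ℝ, 0 < ε →
          ((muProd n) {z | |fBad n z| < ε}).toReal ≤ C * ε ^ α := by
  refine ⟨fun n hn => ⟨mVar_fBad_le hn, three_quarters_le_muProd_abs_fBad_lt hn⟩, ?_⟩
  rintro ⟨C, -, α, hα, hbound⟩
  have hε : Tendsto (fun n : ℕ => 4 / Real.sqrt n) atTop (𝓝 0) :=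
    tendsto_const_nhds.div_atTop (Real.tendsto_sqrt_atTop.comp tendsto_natCast_atTop_atTop)
  have hbound_lim : Tendsto (fun n : ℕ => C * (4 / Real.sqrt n) ^ α) atTop (𝓝 0) := by
    simpa [Real.zero_rpow hα.ne'] using
      ((Real.continuousAt_rpow_const 0 α (Or.inr hα.le)).tendsto.comp hε).const_mul C
  obtain ⟨n, hsmall, hn⟩ :=
    ((hbound_lim.eventually (gt_mem_nhds (by norm_num : (0 : ℝ) < 3 / 4))).and
      (eventually_ge_atTop 1)).exists
  have hlarge : 3 / 4 ≤ ((muProd n) {z | |fBad n z| < 4 / Real.sqrt n}).toReal :=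
    three_quarters_le_muProd_abs_fBad_lt hn
  linarith [hbound n hn (4 / Real.sqrt n) (by positivity)]
end
end
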